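/- arXiv:1506.01859 — 2 statements merged into one kernel-verified Lean document; each statement's English description precedes it below -/
import Mathlib

section
/- Let g : ℝ → ℝ be continuous, and let f̂ : ℝ × ℝ → ℝ be a numerical flux that is consistent with g, i.e. f̂(a,a) = g(a) for all a ∈ ℝ, and strictly monotone with modulus c > 0, i.e. f̂(a₂,b) − f̂(a₁,b) ≥ c(a₂ − a₁) whenever a₁ ≤ a₂, and f̂(a,b₂) − f̂(a,b₁) ≤ −c(b₂ − b₁) whenever b₁ ≤ b₂. Then for all a, b ∈ ℝ: ∫_a^b ( g(ξ) − f̂(a,b) ) dξ ≥ c (a − b)². -/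
/-- Interface entropy-dissipation lower bound for a strictly monotone, consistent
numerical flux: `∫_a^b (g(ξ) − f̂(a,b)) dξ ≥ c (a − b)²`. -/
theorem strictly_monotone_flux_dissipation (g : ℝ → ℝ) (hg : Continuous g)
    (fhat : ℝ → ℝ → ℝ) (c : ℝ) (hc : 0 < c)
    (hcons : ∀ a : ℝ, fhat a a = g a)
    (hmono₁ : ∀ a₁ a₂ b : ℝ, a₁ ≤ a₂ → c * (a₂ - a₁) ≤ fhat a₂ b - fhat a₁ b)
    (hmono₂ : ∀ a b₁ b₂ : ℝ, b₁ ≤ b₂ → fhat a b₂ - fhat a b₁ ≤ -(c * (b₂ - b₁))) :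
    ∀ a b : ℝ, c * (a - b)^2 ≤ ∫ ξ in a..b, (g ξ - fhat a b) := by
  intro a b
  have hint : IntervalIntegrable (fun ξ => g ξ - fhat a b) MeasureTheory.volume a b := by
    exact (hg.sub continuous_const).intervalIntegrable a b
  have hint' : IntervalIntegrable (fun ξ => g ξ - fhat a b) MeasureTheory.volume b a :=
    hint.symm
  rcases le_total a b with hab | hab
  · have key : ∀ ξ ∈ Set.Icc a b, c * (b - a) ≤ g ξ - fhat a b := by
      intro ξ hξ
      have h1 := hmono₁ a ξ ξ hξ.1
      have h2 := hmono₂ a ξ b hξ.2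
      rw [hcons ξ] at h1
      linarith
    calc c * (a - b)^2 = ∫ _ in a..b, c * (b - a) := by
          rw [intervalIntegral.integral_const]; simp; ring
      _ ≤ ∫ ξ in a..b, (g ξ - fhat a b) :=
          intervalIntegral.integral_mono_on hab intervalIntegrable_const hint key
  · have key : ∀ ξ ∈ Set.Icc b a, g ξ - fhat a b ≤ -(c * (a - b)) := by
      intro ξ hξ
      have h1 := hmono₁ ξ a ξ hξ.2
      have h2 := hmono₂ a b ξ hξ.1
      rw [hcons ξ] at h1
      linarith
    have hle : (∫ ξ in b..a, (g ξ - fhat a b)) ≤ ∫ _ in b..a, -(c * (a - b)) :=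
      intervalIntegral.integral_mono_on hab hint' intervalIntegrable_const key
    rw [intervalIntegral.integral_const] at hle
    rw [intervalIntegral.integral_symm b a]
    have : (a - b) • -(c * (a - b)) = -(c * (a - b)^2) := by simp; ring
    rw [this] at hle
    linarith
end

section
/- Let d ≥ 0, q ≥ 0 be integers and σ ≥ 1. There exists a constant C = C(d,q,σ) > 0 such that for every σ-shape-regular (d+1)-simplex κ ⊂ ℝ^{d+1} and every polynomial v ∈ P^q(κ): ∫_{∂κ} |v| dH^d ≤ (C / h_κ) ∫_κ |v(x)| dx, where the left integral is with respect to d-dimensional Hausdorff measure on the boundary ∂κ and h_κ is the diameter of κ. -/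
open MeasureTheory InnerProductSpace

noncomputable section

/-- A `(d+1)`-simplex in `ℝ^{d+1}`: the interior of the convex hull of `d+2`
affinely independent points. -/
def IsSimplex (d : ℕ) (κ : Set (EuclideanSpace ℝ (Fin (d+1)))) : Prop :=
  ∃ pts : Fin (d+2) → EuclideanSpace ℝ (Fin (d+1)),
    AffineIndependent ℝ pts ∧ κ = interior (convexHull ℝ (Set.range pts))

/-- A `σ`-shape-regular `(d+1)`-simplex: `σ⁻¹ ≤ h_κ |∂κ| / |κ| ≤ σ`, where `h_κ` is the
diameter, `|∂κ|` the `d`-dimensional Hausdorff measure of the boundary, and `|κ|` the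
Lebesgue measure. -/
def ShapeRegular (d : ℕ) (σ : ℝ) (κ : Set (EuclideanSpace ℝ (Fin (d+1)))) : Prop :=
  IsSimplex d κ ∧
    σ⁻¹ ≤ Metric.diam κ * (μH[(d : ℝ)] (frontier κ)).toReal / (volume κ).toReal ∧
    Metric.diam κ * (μH[(d : ℝ)] (frontier κ)).toReal / (volume κ).toReal ≤ σ

/-- `v` is (the restriction of) a real polynomial in `d+1` variables of total degree
at most `q`, i.e. `v ∈ P^q`. -/
def IsPolyDeg (d q : ℕ) (v : EuclideanSpace ℝ (Fin (d+1)) → ℝ) : Prop :=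
  ∃ P : MvPolynomial (Fin (d+1)) ℝ, P.totalDegree ≤ q ∧
    ∀ x, v x = MvPolynomial.eval (fun i => x i) P

/-- `L^∞(κ)` norm: `sup_{x ∈ κ} |v x|`. -/
def supNorm (d : ℕ) (κ : Set (EuclideanSpace ℝ (Fin (d+1))))
    (v : EuclideanSpace ℝ (Fin (d+1)) → ℝ) : ℝ :=
  ⨆ x ∈ κ, |v x|

lemma abs_coord_le_norm {m : ℕ} (c : EuclideanSpace ℝ (Fin m)) (i : Fin m) : |c i| ≤ ‖c‖ := by
  rw [EuclideanSpace.norm_eq]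
  have h1 : |c i| = Real.sqrt (‖c i‖ ^ 2) := by
    rw [Real.sqrt_sq_eq_abs, Real.norm_eq_abs, abs_abs]
  rw [h1]
  apply Real.sqrt_le_sqrt
  exact Finset.single_le_sum (f := fun j => ‖c j‖ ^ 2) (fun j _ => by positivity) (Finset.mem_univ i)

lemma contEval {m : ℕ} (P : MvPolynomial (Fin m) ℝ) :
    Continuous fun x : EuclideanSpace ℝ (Fin m) => MvPolynomial.eval (fun i => x i) P :=
  (MvPolynomial.continuous_eval (p := P)).comp
    (continuous_pi fun i => (EuclideanSpace.proj i (𝕜 := ℝ)).continuous)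

lemma eval_line {m : ℕ} (c b : Fin m → ℝ) (P : MvPolynomial (Fin m) ℝ) (t : ℝ) :
    Polynomial.eval t (MvPolynomial.aeval
        (fun i => Polynomial.C (c i) + Polynomial.C (b i) * Polynomial.X) P) =
      MvPolynomial.eval (fun i => c i + b i * t) P := by
  induction P using MvPolynomial.induction_on with
  | C a => simp
  | add p q hp hq => simp only [map_add, Polynomial.eval_add, hp, hq]
  | mul_X p i hp =>
      simp only [map_mul, Polynomial.eval_mul, hp, MvPolynomial.aeval_X, MvPolynomial.eval_mul,
        MvPolynomial.eval_X, Polynomial.eval_add, Polynomial.eval_mul, Polynomial.eval_C,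
        Polynomial.eval_X]

lemma eq_zero_of_eval_zero_on_ball {m : ℕ} (P : MvPolynomial (Fin m) ℝ)
    (x₀ : EuclideanSpace ℝ (Fin m)) (r : ℝ) (hr : 0 < r)
    (h : ∀ x : EuclideanSpace ℝ (Fin m), x ∈ Metric.ball x₀ r →
      MvPolynomial.eval (fun i => x i) P = 0) :
    P = 0 := by
  have key : ∀ z : Fin m → ℝ, MvPolynomial.eval z P = 0 := by
    intro z
    set w : EuclideanSpace ℝ (Fin m) := (WithLp.equiv 2 (Fin m → ℝ)).symm z with hw
    have hwz : ∀ i, w i = z i := fun i => rfl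
    set Q : Polynomial ℝ := MvPolynomial.aeval
      (fun i => Polynomial.C (x₀ i) + Polynomial.C (z i - x₀ i) * Polynomial.X) P with hQdef
    have key2 : ∀ t : ℝ, Q.eval t = MvPolynomial.eval (fun i => x₀ i + (z i - x₀ i) * t) P :=
      fun t => eval_line (fun i => x₀ i) (fun i => z i - x₀ i) P t
    set n : ℝ := ‖w - x₀‖ with hn
    have hn0 : 0 ≤ n := norm_nonneg _
    set δ : ℝ := r / (n + 1) with hδdef
    have hδ : 0 < δ := by positivity
    have hroots : ∀ t ∈ Set.Ioo (-δ) δ, Q.eval t = 0 := by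
      intro t ht
      have htabs : |t| < δ := abs_lt.mpr ⟨ht.1, ht.2⟩
      have hmem : x₀ + t • (w - x₀) ∈ Metric.ball x₀ r := by
        rw [Metric.mem_ball, dist_eq_norm]
        have h2 : x₀ + t • (w - x₀) - x₀ = t • (w - x₀) := by abel
        rw [h2, norm_smul]
        calc |t| * ‖w - x₀‖ ≤ |t| * (n + 1) := by nlinarith [abs_nonneg t]
          _ < δ * (n + 1) := by nlinarith
          _ = r := by rw [hδdef]; field_simp
      have h0 := h _ hmem
      have hfun : (fun i => x₀ i + (z i - x₀ i) * t) = fun i => (x₀ + t • (w - x₀)) i := by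
        funext i
        have : (x₀ + t • (w - x₀)) i = x₀ i + t * (w i - x₀ i) := by
          rfl
        rw [this, hwz i]; ring
      rw [key2, hfun, h0]
    have hQ : Q = 0 := by
      apply Polynomial.eq_zero_of_infinite_isRoot
      exact (Set.Ioo_infinite (by linarith)).mono fun t ht => hroots t ht
    have h1 := key2 1
    rw [hQ] at h1
    simp only [Polynomial.eval_zero] at h1
    have hfun1 : (fun i => x₀ i + (z i - x₀ i) * 1) = z := by funext i; ring
    rw [hfun1] at h1
    exact h1.symm
  have : ∀ z : Fin m → ℝ, MvPolynomial.eval z P = MvPolynomial.eval z 0 := by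
    intro z; rw [key z]; simp
  exact MvPolynomial.funext this


lemma totalDegree_bind1_le {n : ℕ} (f : Fin n → MvPolynomial (Fin n) ℝ)
    (hf : ∀ i, (f i).totalDegree ≤ 1) (P : MvPolynomial (Fin n) ℝ) :
    (MvPolynomial.bind₁ f P).totalDegree ≤ P.totalDegree := by
  rw [show (MvPolynomial.bind₁ f P) = MvPolynomial.eval₂ (algebraMap ℝ _) f P from rfl,
    MvPolynomial.eval₂_eq]
  refine (MvPolynomial.totalDegree_finset_sum _ _).trans (Finset.sup_le ?_)
  intro d hd
  calc (MvPolynomial.totalDegree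
          (algebraMap ℝ (MvPolynomial (Fin n) ℝ) (MvPolynomial.coeff d P) *
            ∏ i ∈ d.support, f i ^ d i))
      ≤ (algebraMap ℝ (MvPolynomial (Fin n) ℝ) (MvPolynomial.coeff d P)).totalDegree +
          (∏ i ∈ d.support, f i ^ d i).totalDegree := MvPolynomial.totalDegree_mul _ _
    _ ≤ 0 + ∑ i ∈ d.support, (f i ^ d i).totalDegree := by
        refine add_le_add ?_ (MvPolynomial.totalDegree_finset_prod _ _)
        simp [MvPolynomial.algebraMap_apply, MvPolynomial.totalDegree_C]
    _ ≤ ∑ i ∈ d.support, d i := by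
        rw [zero_add]
        refine Finset.sum_le_sum fun i _ => ?_
        calc (f i ^ d i).totalDegree ≤ d i * (f i).totalDegree :=
              MvPolynomial.totalDegree_pow _ _
          _ ≤ d i * 1 := Nat.mul_le_mul_left _ (hf i)
          _ = d i := Nat.mul_one _
    _ ≤ P.totalDegree := by
        have := MvPolynomial.le_totalDegree hd
        rwa [Finsupp.sum] at this

lemma eval_bind1 {n : ℕ} (f : Fin n → MvPolynomial (Fin n) ℝ) (P : MvPolynomial (Fin n) ℝ)
    (y : Fin n → ℝ) :
    MvPolynomial.eval y (MvPolynomial.bind₁ f P) =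
      MvPolynomial.eval (fun i => MvPolynomial.eval y (f i)) P := by
  exact MvPolynomial.eval₂Hom_bind₁ (RingHom.id ℝ) y f P

set_option maxHeartbeats 1000000 in
set_option synthInstance.maxHeartbeats 400000 in
lemma crux (m q : ℕ) (U : Set (EuclideanSpace ℝ (Fin m))) (hU : IsOpen U) (hne : U.Nonempty)
    (hbdd : Bornology.IsBounded U) :
    ∃ C : ℝ, 0 < C ∧ ∀ P : MvPolynomial (Fin m) ℝ, P.totalDegree ≤ q →
      ∀ x ∈ closure U, |MvPolynomial.eval (fun i => x i) P| ≤
        C * ∫ y in U, |MvPolynomial.eval (fun i => y i) P| := by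
  classical
  set K := closure U with hKdef
  have hK : IsCompact K := hbdd.isCompact_closure
  have hKne : K.Nonempty := hne.closure
  set V := MvPolynomial.restrictTotalDegree (Fin m) ℝ q with hVdef
  set n := Module.finrank ℝ ↥V with hndef
  set bV := Module.finBasis ℝ ↥V with hbVdef
  set g : Fin n → EuclideanSpace ℝ (Fin m) → ℝ :=
    fun i x => MvPolynomial.eval (fun j => x j) ((bV i : MvPolynomial (Fin m) ℝ)) with hgdef
  have hgc : ∀ i, Continuous (g i) := fun i => contEval _
  have hIntOn : ∀ f : EuclideanSpace ℝ (Fin m) → ℝ, Continuous f → IntegrableOn f U volume := fun f hf =>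
    (hf.continuousOn.integrableOn_compact hK).mono_set subset_closure
  set F : EuclideanSpace ℝ (Fin n) → EuclideanSpace ℝ (Fin m) → ℝ := fun c x => ∑ i, c i * g i x with hFdef
  have hFc : ∀ c, Continuous (F c) :=
    fun c => continuous_finset_sum _ fun i _ => continuous_const.mul (hgc i)
  have hFint : ∀ c, IntegrableOn (fun x => |F c x|) U volume := fun c => (hIntOn _ (hFc c)).abs
  set G : EuclideanSpace ℝ (Fin n) → ℝ := fun c => ∫ x in U, |F c x| with hGdef
  have hGnonneg : ∀ c, 0 ≤ G c := fun c => integral_nonneg fun x => abs_nonneg _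
  have hGcont : Continuous G := by
    rw [continuous_iff_continuousAt]
    intro c₀
    apply continuousAt_of_dominated (bound := fun x => (‖c₀‖ + 1) * ∑ i, |g i x|)
    · filter_upwards with c
      exact ((hFc c).abs).aestronglyMeasurable
    · filter_upwards [Metric.ball_mem_nhds c₀ one_pos] with c hc
      refine ae_of_all _ fun x => ?_
      have hcn : ‖c‖ ≤ ‖c₀‖ + 1 := by
        have h1 : ‖c - c₀‖ < 1 := by rwa [Metric.mem_ball, dist_eq_norm] at hc
        have he : c₀ + (c - c₀) = c := by abel
        calc ‖c‖ = ‖c₀ + (c - c₀)‖ := by rw [he]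
          _ ≤ ‖c₀‖ + ‖c - c₀‖ := norm_add_le _ _
          _ ≤ ‖c₀‖ + 1 := by linarith
      calc ‖|F c x|‖ = |F c x| := by rw [Real.norm_eq_abs, abs_abs]
        _ ≤ ∑ i, |c i * g i x| := Finset.abs_sum_le_sum_abs _ _
        _ ≤ ∑ i, (‖c₀‖ + 1) * |g i x| := by
            refine Finset.sum_le_sum fun i _ => ?_
            rw [abs_mul]
            refine mul_le_mul_of_nonneg_right ?_ (abs_nonneg _)
            exact (abs_coord_le_norm c i).trans hcn
        _ = (‖c₀‖ + 1) * ∑ i, |g i x| := by rw [Finset.mul_sum]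
    · exact (hIntOn _ (continuous_finset_sum _ fun i _ => (hgc i).abs)).const_mul _
    · refine ae_of_all _ fun x => ?_
      have : Continuous fun c : EuclideanSpace ℝ (Fin n) => F c x :=
        continuous_finset_sum _ fun i _ =>
          ((EuclideanSpace.proj i (𝕜 := ℝ)).continuous).mul continuous_const
      exact (this.abs).continuousAt
  have mem1 : (1 : MvPolynomial (Fin m) ℝ) ∈ V := by
    rw [hVdef, MvPolynomial.mem_restrictTotalDegree]
    simp [MvPolynomial.totalDegree_one]
  haveI : Nontrivial ↥V := ⟨⟨⟨1, mem1⟩, 0, by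
    intro hcon
    exact one_ne_zero (congrArg Subtype.val hcon)⟩⟩
  have hn : 0 < n := Module.finrank_pos
  set c1 : EuclideanSpace ℝ (Fin n) := EuclideanSpace.single (⟨0, hn⟩ : Fin n) (1 : ℝ)
  have hc1 : ‖c1‖ = 1 := by rw [EuclideanSpace.norm_single]; norm_num
  set S := Metric.sphere (0 : EuclideanSpace ℝ (Fin n)) 1 with hSdef
  have hS : IsCompact S := isCompact_sphere _ _
  have hSne : S.Nonempty := ⟨c1, by rwa [hSdef, mem_sphere_zero_iff_norm]⟩
  obtain ⟨c₀, hc₀S, hmin⟩ := hS.exists_isMinOn hSne hGcont.continuousOn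
  have hc₀n : ‖c₀‖ = 1 := mem_sphere_zero_iff_norm.mp hc₀S
  have hFP : ∀ (c : EuclideanSpace ℝ (Fin n)) (x : EuclideanSpace ℝ (Fin m)),
      F c x = MvPolynomial.eval (fun j => x j)
        ((∑ i, c i • bV i : V) : MvPolynomial (Fin m) ℝ) := by
    intro c x
    have hco : ((∑ i, c i • bV i : V) : MvPolynomial (Fin m) ℝ) =
        ∑ i, c i • (bV i : MvPolynomial (Fin m) ℝ) := by
      simp
    rw [hco, map_sum]
    simp only [MvPolynomial.smul_eval]
    rfl
  have hm₀ : 0 < G c₀ := by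
    rcases (hGnonneg c₀).lt_or_eq with h | h
    · exact h
    · exfalso
      have hzero : (fun x => |F c₀ x|) =ᵐ[volume.restrict U] 0 :=
        (setIntegral_eq_zero_iff_of_nonneg_ae (ae_of_all _ fun x => abs_nonneg _)
          (hFint c₀)).mp h.symm
      have hzero' : ∀ x ∈ U, F c₀ x = 0 := by
        by_contra hcon
        push_neg at hcon
        obtain ⟨x₁, hx₁U, hx₁⟩ := hcon
        set s := {x : EuclideanSpace ℝ (Fin m) | F c₀ x ≠ 0} ∩ U with hsdef
        have hs_open : IsOpen s :=
          (isOpen_compl_singleton.preimage (hFc c₀)).inter hU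
        have hae : volume.restrict U {x : EuclideanSpace ℝ (Fin m) | ¬ |F c₀ x| = 0} = 0 := by
          have := hzero
          rw [Filter.EventuallyEq, ae_iff] at this
          simpa using this
        have hsub : s ⊆ {x : EuclideanSpace ℝ (Fin m) | ¬ |F c₀ x| = 0} := by
          intro x hx
          simp only [Set.mem_setOf_eq, abs_eq_zero]
          exact hx.1
        have hs0 : volume.restrict U s = 0 := measure_mono_null hsub hae
        rw [Measure.restrict_apply hs_open.measurableSet] at hs0
        have : s ∩ U = s := by rw [hsdef]; ext x; simp (config := {contextual := true}) [and_assoc]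
        rw [this] at hs0
        have hpos := hs_open.measure_pos volume ⟨x₁, hx₁, hx₁U⟩
        exact hpos.ne' hs0
      obtain ⟨x₂, hx₂⟩ := hne
      obtain ⟨r, hr, hball⟩ := Metric.isOpen_iff.mp hU x₂ hx₂
      have hP0 : ((∑ i, c₀ i • bV i : V) : MvPolynomial (Fin m) ℝ) = 0 := by
        apply eq_zero_of_eval_zero_on_ball _ x₂ r hr
        intro x hx
        rw [← hFP]
        exact hzero' x (hball hx)
      have hsum0 : (∑ i, c₀ i • bV i : V) = 0 := Subtype.ext hP0
      have hci : ∀ i, c₀ i = 0 :=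
        Fintype.linearIndependent_iff.mp bV.linearIndependent _ hsum0
      rw [EuclideanSpace.norm_eq] at hc₀n
      simp only [hci, norm_zero] at hc₀n
      norm_num at hc₀n
  have hGsmul : ∀ (a : ℝ) c, G (a • c) = |a| * G c := by
    intro a c
    have hFs : ∀ x, F (a • c) x = a * F c x := by
      intro x
      simp only [hFdef, PiLp.smul_apply, smul_eq_mul, Finset.mul_sum, mul_assoc]
    simp only [hGdef, hFs, abs_mul]
    exact integral_const_mul _ _
  have hGlow : ∀ c, G c₀ * ‖c‖ ≤ G c := by
    intro c
    rcases eq_or_ne c 0 with rfl | hc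
    · have : F (0 : EuclideanSpace ℝ (Fin n)) = fun _ => 0 := by
        funext x; simp [hFdef]
      simp [hGdef, this]
    · have hcn : 0 < ‖c‖ := norm_pos_iff.mpr hc
      have h1 : (‖c‖⁻¹ • c) ∈ S := by
        rw [hSdef, mem_sphere_zero_iff_norm, norm_smul, Real.norm_eq_abs,
          abs_of_pos (inv_pos.mpr hcn)]
        field_simp
      have h2 : G c₀ ≤ G (‖c‖⁻¹ • c) := hmin h1
      rw [hGsmul, abs_of_pos (inv_pos.mpr hcn)] at h2
      calc G c₀ * ‖c‖ ≤ (‖c‖⁻¹ * G c) * ‖c‖ := mul_le_mul_of_nonneg_right h2 hcn.le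
        _ = G c := by field_simp
  have hMex : ∀ i, ∃ Mi : ℝ, 0 ≤ Mi ∧ ∀ x ∈ K, |g i x| ≤ Mi := by
    intro i
    obtain ⟨xs, hxs, hmax⟩ := hK.exists_isMaxOn hKne ((hgc i).abs.continuousOn)
    exact ⟨|g i xs|, abs_nonneg _, fun x hx => hmax hx⟩
  choose M hM0 hMle using hMex
  set R := ∑ i, M i with hRdef
  have hR0 : 0 ≤ R := Finset.sum_nonneg fun i _ => hM0 i
  refine ⟨(R + 1) / G c₀, by positivity, ?_⟩
  intro P hPdeg x hx
  have hPmem : P ∈ V := by rw [hVdef, MvPolynomial.mem_restrictTotalDegree]; exact hPdeg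
  set c : EuclideanSpace ℝ (Fin n) :=
    (WithLp.equiv 2 (Fin n → ℝ)).symm (fun i => bV.repr ⟨P, hPmem⟩ i) with hcdef
  have hPc : (∑ i, c i • bV i) = (⟨P, hPmem⟩ : V) := bV.sum_repr _
  have hevalP : ∀ y : EuclideanSpace ℝ (Fin m), MvPolynomial.eval (fun j => y j) P = F c y := by
    intro y
    rw [hFP c y, hPc]
  have hfe : (fun y : EuclideanSpace ℝ (Fin m) => |F c y|) =
      fun y => |MvPolynomial.eval (fun i => y i) P| := by
    funext y
    rw [hevalP y]
  have hGc : G c = ∫ y in U, |MvPolynomial.eval (fun i => y i) P| := by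
    show (∫ y in U, |F c y|) = _
    rw [hfe]
  calc |MvPolynomial.eval (fun i => x i) P| = |F c x| := by rw [hevalP x]
    _ ≤ ∑ i, |c i * g i x| := Finset.abs_sum_le_sum_abs _ _
    _ ≤ ∑ i, ‖c‖ * M i := by
        refine Finset.sum_le_sum fun i _ => ?_
        rw [abs_mul]
        exact mul_le_mul (abs_coord_le_norm c i) (hMle i x hx) (abs_nonneg _) (norm_nonneg _)
    _ = ‖c‖ * R := by rw [← Finset.mul_sum]
    _ ≤ ‖c‖ * (R + 1) := by nlinarith [norm_nonneg c]
    _ = ((R + 1) / G c₀) * (G c₀ * ‖c‖) := by field_simp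
    _ ≤ ((R + 1) / G c₀) * G c := by
        refine mul_le_mul_of_nonneg_left (hGlow c) ?_
        positivity
    _ = ((R + 1) / G c₀) * ∫ y in U, |MvPolynomial.eval (fun i => y i) P| := by rw [hGc]

set_option maxHeartbeats 1000000 in
/-- Trace inverse inequality on shape-regular simplices:
`∫_{∂κ} |v| dH^d ≤ (C/h_κ) ∫_κ |v| dx` for polynomials `v ∈ P^q(κ)`, with
`C = C(d,q,σ)`. -/
theorem trace_inverse_inequality (d q : ℕ) (σ : ℝ) (hσ : 1 ≤ σ) :
    ∃ C : ℝ, 0 < C ∧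
      ∀ κ : Set (EuclideanSpace ℝ (Fin (d+1))), ShapeRegular d σ κ →
        ∀ v : EuclideanSpace ℝ (Fin (d+1)) → ℝ, IsPolyDeg d q v →
          ∫ x in frontier κ, |v x| ∂(μH[(d : ℝ)]) ≤
            (C / Metric.diam κ) * ∫ x in κ, |v x| := by
  classical
  have hσ0 : 0 < σ := lt_of_lt_of_le one_pos hσ
  obtain ⟨b0⟩ : Nonempty (AffineBasis (Fin (d+2)) ℝ (EuclideanSpace ℝ (Fin (d+1)))) := by
    apply AffineBasis.exists_affineBasis_of_finiteDimensional
    simp [finrank_euclideanSpace_fin]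
  set T₀ := interior (convexHull ℝ (Set.range ⇑b0)) with hT₀def
  have hT₀open : IsOpen T₀ := isOpen_interior
  have hT₀ne : T₀.Nonempty := by
    rw [hT₀def]
    rw [(convex_convexHull ℝ _).interior_nonempty_iff_affineSpan_eq_top]
    rw [affineSpan_convexHull]
    exact b0.tot
  have hcomp : IsCompact (convexHull ℝ (Set.range ⇑b0)) :=
    (Set.finite_range ⇑b0).isCompact_convexHull (𝕜 := ℝ)
  have hT₀bdd : Bornology.IsBounded T₀ := hcomp.isBounded.subset interior_subset
  obtain ⟨C₀, hC₀, hcrux⟩ := crux (d+1) q T₀ hT₀open hT₀ne hT₀bdd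
  set vT := (volume T₀).toReal with hvTdef
  have hvTpos : 0 < vT := by
    apply ENNReal.toReal_pos
    · exact (hT₀open.measure_pos volume hT₀ne).ne'
    · exact ne_top_of_le_ne_top hcomp.measure_lt_top.ne (measure_mono interior_subset)
  refine ⟨C₀ * vT * σ, by positivity, ?_⟩
  rintro κ ⟨⟨pts, hind, hκeq⟩, hlow, hup⟩ v ⟨P, hPdeg, hv⟩
  set B := (μH[(d : ℝ)] (frontier κ)).toReal with hBdef
  set Vol := (volume κ).toReal with hVoldef
  have hσinv : 0 < σ⁻¹ := inv_pos.mpr hσ0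
  have hpos : 0 < Metric.diam κ * B / Vol := lt_of_lt_of_le hσinv hlow
  have hVol : 0 < Vol := by
    rcases (ENNReal.toReal_nonneg (a := volume κ)).lt_or_eq with h | h
    · exact h
    · exfalso; rw [hVoldef] at hpos; rw [← h, div_zero] at hpos; exact lt_irrefl _ hpos
  have hdB : 0 < Metric.diam κ * B := by
    have h1 := mul_pos hpos hVol
    rwa [div_mul_cancel₀ _ hVol.ne'] at h1
  have hdiam : 0 < Metric.diam κ := by
    rcases (Metric.diam_nonneg (s := κ)).lt_or_eq with h | h
    · exact h
    · exfalso; rw [← h, zero_mul] at hdB; exact lt_irrefl _ hdB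
  have hB : 0 < B := by
    rcases (ENNReal.toReal_nonneg (a := μH[(d : ℝ)] (frontier κ))).lt_or_eq with h | h
    · exact h
    · exfalso; rw [hBdef] at hdB; rw [← h, mul_zero] at hdB; exact lt_irrefl _ hdB
  have hμfront_lt : μH[(d : ℝ)] (frontier κ) < ⊤ := by
    rw [lt_top_iff_ne_top]
    intro htop
    rw [hBdef, htop] at hB
    simp at hB
  -- affine equivalence
  have hb1top : affineSpan ℝ (Set.range pts) = ⊤ := by
    rw [hind.affineSpan_eq_top_iff_card_eq_finrank_add_one]
    simp [finrank_euclideanSpace_fin]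
  set b1 : AffineBasis (Fin (d+2)) ℝ (EuclideanSpace ℝ (Fin (d+1))) :=
    ⟨pts, hind, hb1top⟩ with hb1def
  have hb1coe : ∀ j, b1 j = pts j := fun j => rfl
  set L := (b0.basisOf 0).equiv (b1.basisOf 0) (Equiv.refl _) with hLdef
  set A : EuclideanSpace ℝ (Fin (d+1)) → EuclideanSpace ℝ (Fin (d+1)) :=
    fun x => b1 0 + L (x - b0 0) with hAdef
  set Ainv : EuclideanSpace ℝ (Fin (d+1)) → EuclideanSpace ℝ (Fin (d+1)) :=
    fun y => b0 0 + L.symm (y - b1 0) with hAinvdef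
  have hLcont : Continuous L := L.toLinearMap.continuous_of_finiteDimensional
  have hLscont : Continuous L.symm := L.symm.toLinearMap.continuous_of_finiteDimensional
  have hAcont : Continuous A := continuous_const.add (hLcont.comp (continuous_id.sub continuous_const))
  have hAinvcont : Continuous Ainv :=
    continuous_const.add (hLscont.comp (continuous_id.sub continuous_const))
  set hA : Homeomorph (EuclideanSpace ℝ (Fin (d+1))) (EuclideanSpace ℝ (Fin (d+1))) :=
    { toFun := A
      invFun := Ainv
      left_inv := fun x => by
        show b0 0 + L.symm (b1 0 + L (x - b0 0) - b1 0) = x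
        have h1 : b1 0 + L (x - b0 0) - b1 0 = L (x - b0 0) := by abel
        rw [h1, LinearEquiv.symm_apply_apply]; abel
      right_inv := fun y => by
        show b1 0 + L (b0 0 + L.symm (y - b1 0) - b0 0) = y
        have h1 : b0 0 + L.symm (y - b1 0) - b0 0 = L.symm (y - b1 0) := by abel
        rw [h1, LinearEquiv.apply_symm_apply]; abel
      continuous_toFun := hAcont
      continuous_invFun := hAinvcont } with hAhdef
  have hAh : ⇑hA = A := rfl
  have hAb : ∀ j, A (b0 j) = b1 j := by
    intro j
    by_cases hj : j = 0
    · subst hj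
      show b1 0 + L (b0 0 - b0 0) = b1 0
      rw [sub_self, L.map_zero, add_zero]
    · have h1 : b0 j - b0 0 = b0.basisOf 0 ⟨j, hj⟩ := by
        rw [AffineBasis.basisOf_apply]; rfl
      show b1 0 + L (b0 j - b0 0) = b1 j
      rw [h1, hLdef, Module.Basis.equiv_apply, Equiv.refl_apply, AffineBasis.basisOf_apply]
      show b1 0 + (b1 j -ᵥ b1 0) = b1 j
      rw [vsub_eq_sub]; abel
  set Aff : EuclideanSpace ℝ (Fin (d+1)) →ᵃ[ℝ] EuclideanSpace ℝ (Fin (d+1)) :=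
    AffineMap.mk' A (L : _ →ₗ[ℝ] _) (b0 0) (fun p => by
      show b1 0 + L (p - b0 0) = L (p -ᵥ b0 0) +ᵥ (b1 0 + L (b0 0 - b0 0))
      rw [sub_self, L.map_zero, add_zero, vsub_eq_sub, vadd_eq_add]
      abel) with hAffdef
  have hAffcoe : ⇑Aff = A := AffineMap.coe_mk' _ _ _ _
  have hAimg : κ = A '' T₀ := by
    have hrange : Set.range pts = A '' Set.range ⇑b0 := by
      rw [← Set.range_comp]
      have : (A ∘ ⇑b0) = pts := funext fun j => by
        rw [Function.comp_apply, hAb j, hb1coe j]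
      rw [this]
    have hconv : convexHull ℝ (A '' Set.range ⇑b0) = A '' convexHull ℝ (Set.range ⇑b0) := by
      rw [← hAffcoe, AffineMap.image_convexHull]
    rw [hκeq, hrange, hconv, hT₀def, ← hAh, Homeomorph.image_interior]
  have hAclos : closure κ = A '' closure T₀ := by
    rw [hAimg, ← hAh, Homeomorph.image_closure]
  -- change of variables
  set LC : EuclideanSpace ℝ (Fin (d+1)) →L[ℝ] EuclideanSpace ℝ (Fin (d+1)) :=
    LinearMap.toContinuousLinearMap (L : _ →ₗ[ℝ] _) with hLCdef
  set D := LinearMap.det (L : EuclideanSpace ℝ (Fin (d+1)) →ₗ[ℝ] EuclideanSpace ℝ (Fin (d+1)))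
    with hDdef
  have hDne : D ≠ 0 := by
    have h1 := LinearEquiv.isUnit_det' L
    exact isUnit_iff_ne_zero.mp h1
  have hDpos : 0 < |D| := abs_pos.mpr hDne
  have hfe : A = fun x => LC x + (b1 0 - L (b0 0)) := by
    funext x
    show b1 0 + L (x - b0 0) = LC x + (b1 0 - L (b0 0))
    have hLCx : LC x = L x := rfl
    rw [hLCx, map_sub]
    abel
  have hder : ∀ x ∈ T₀, HasFDerivWithinAt A LC T₀ x := by
    intro x hx
    rw [hfe]
    exact ((LC.hasFDerivAt).add_const _).hasFDerivWithinAt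
  have hdet : LC.det = D := rfl
  have hCOV : ∀ gfun : EuclideanSpace ℝ (Fin (d+1)) → ℝ,
      ∫ x in κ, gfun x = ∫ x in T₀, |D| • gfun (A x) := by
    intro gfun
    rw [hAimg]
    exact integral_image_eq_integral_abs_det_fderiv_smul volume hT₀open.measurableSet hder
      (hA.injective.injOn) gfun
  have hVolhD : Vol = |D| * vT := by
    have h1 := hCOV (fun _ => (1 : ℝ))
    rw [setIntegral_const, setIntegral_const] at h1
    simp only [smul_eq_mul, mul_one] at h1
    rw [hVoldef, hvTdef, ← measureReal_def, ← measureReal_def, h1]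
    ring
  have hIntEq : ∫ x in κ, |v x| = |D| * ∫ y in T₀, |v (A y)| := by
    have h1 := hCOV (fun x => |v x|)
    rw [h1, integral_smul, smul_eq_mul]
  -- polynomial composition
  set cst := b1 0 - L (b0 0) with hcstdef
  set Mm : Fin (d+1) → Fin (d+1) → ℝ :=
    fun i j => L (EuclideanSpace.single j (1 : ℝ)) i with hMmdef
  have hAcoord : ∀ (y : EuclideanSpace ℝ (Fin (d+1))) (i : Fin (d+1)),
      A y i = cst i + ∑ j, Mm i j * y j := by
    intro y i
    have hy : ∑ j, y j • EuclideanSpace.single j (1 : ℝ) = y := by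
      have h1 := (EuclideanSpace.basisFun (Fin (d+1)) ℝ).sum_repr y
      simpa [EuclideanSpace.basisFun_apply, EuclideanSpace.basisFun_repr] using h1
    have hcoord : L y i = ∑ j, Mm i j * y j := by
      have h2 : (EuclideanSpace.proj i (𝕜 := ℝ)) (L y) =
          ∑ j, y j * (L (EuclideanSpace.single j (1:ℝ)) i) := by
        conv_lhs => rw [← hy]
        rw [map_sum, map_sum]
        congr 1
        funext j
        rw [_root_.map_smul, _root_.map_smul]
        simp [PiLp.proj_apply, smul_eq_mul]
      have h3 : (EuclideanSpace.proj i (𝕜 := ℝ)) (L y) = L y i := rfl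
      rw [h3] at h2
      rw [h2]
      exact Finset.sum_congr rfl fun j _ => mul_comm _ _
    have h4 : A y = LC y + cst := by rw [hfe]
    have h5 : A y i = LC y i + cst i := by rw [h4]; rfl
    have h6 : LC y i = L y i := rfl
    rw [h5, h6, hcoord]
    ring
  set Q := MvPolynomial.bind₁
    (fun i => MvPolynomial.C (cst i) + ∑ j, MvPolynomial.C (Mm i j) * MvPolynomial.X j) P
    with hQdef
  have hsub1 : ∀ i, (MvPolynomial.C (cst i) +
      ∑ j, MvPolynomial.C (Mm i j) * MvPolynomial.X j : MvPolynomial (Fin (d+1)) ℝ).totalDegree ≤ 1 := by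
    intro i
    refine (MvPolynomial.totalDegree_add _ _).trans (max_le ?_ ?_)
    · simp [MvPolynomial.totalDegree_C]
    · refine (MvPolynomial.totalDegree_finset_sum _ _).trans (Finset.sup_le fun j _ => ?_)
      refine (MvPolynomial.totalDegree_mul _ _).trans ?_
      simp [MvPolynomial.totalDegree_C, MvPolynomial.totalDegree_X]
  have hQdeg : Q.totalDegree ≤ q := (totalDegree_bind1_le _ hsub1 P).trans hPdeg
  have hvQ : ∀ y : EuclideanSpace ℝ (Fin (d+1)), v (A y) = MvPolynomial.eval (fun i => y i) Q := by
    intro y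
    rw [hv (A y), hQdef, eval_bind1]
    have harg : (fun i => A y i) = (fun i => MvPolynomial.eval (fun k => y k)
        (MvPolynomial.C (cst i) + ∑ j, MvPolynomial.C (Mm i j) * MvPolynomial.X j)) := by
      funext i
      rw [hAcoord y i]
      simp [map_sum]
    rw [harg]
  -- sup bound
  set I₀ := ∫ z in T₀, |v (A z)| with hI₀def
  have hI₀eq : (∫ z in T₀, |MvPolynomial.eval (fun i => z i) Q|) = I₀ := by
    rw [hI₀def]
    congr 1
    funext z
    rw [hvQ z]
  have hI₀nonneg : 0 ≤ I₀ := integral_nonneg fun _ => abs_nonneg _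
  have hfrontsub : frontier κ ⊆ A '' closure T₀ := by
    rw [← hAclos]; exact frontier_subset_closure
  set Mbd := C₀ * I₀ with hMbddef
  have hbd : ∀ x ∈ frontier κ, ‖|v x|‖ ≤ Mbd := by
    intro x hxf
    obtain ⟨y, hyK, rfl⟩ := hfrontsub hxf
    rw [Real.norm_eq_abs, abs_abs, hvQ y]
    calc |MvPolynomial.eval (fun i => y i) Q|
        ≤ C₀ * ∫ z in T₀, |MvPolynomial.eval (fun i => z i) Q| := hcrux Q hQdeg y hyK
      _ = Mbd := by rw [hI₀eq]
  have hLHS : (∫ x in frontier κ, |v x| ∂(μH[(d : ℝ)])) ≤ Mbd * B := by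
    have h1 : (∫ x in frontier κ, |v x| ∂(μH[(d : ℝ)])) ≤
        ‖∫ x in frontier κ, |v x| ∂(μH[(d : ℝ)])‖ := by
      rw [Real.norm_eq_abs]; exact le_abs_self _
    exact h1.trans (norm_setIntegral_le_of_norm_le_const hμfront_lt
      hbd)
  -- conclude
  set J := ∫ x in κ, |v x| with hJdef
  have hJ0 : 0 ≤ J := integral_nonneg fun _ => abs_nonneg _
  have hI₀val : I₀ = J * vT / Vol := by
    rw [hVolhD, hIntEq]
    rw [mul_comm (|D|) I₀, mul_assoc, mul_div_assoc]
    rw [div_self (by positivity : |D| * vT ≠ 0)]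
    ring
  have hBV : B / Vol ≤ σ / Metric.diam κ := by
    rw [div_le_div_iff₀ hVol hdiam]
    calc B * Metric.diam κ = Metric.diam κ * B := mul_comm _ _
      _ = (Metric.diam κ * B / Vol) * Vol := (div_mul_cancel₀ _ hVol.ne').symm
      _ ≤ σ * Vol := mul_le_mul_of_nonneg_right hup hVol.le
  calc (∫ x in frontier κ, |v x| ∂(μH[(d : ℝ)])) ≤ Mbd * B := hLHS
    _ = C₀ * vT * J * (B / Vol) := by rw [hMbddef, hI₀val]; ring
    _ ≤ C₀ * vT * J * (σ / Metric.diam κ) := by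
        refine mul_le_mul_of_nonneg_left hBV ?_
        positivity
    _ = (C₀ * vT * σ / Metric.diam κ) * J := by ring
end
end
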